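/- arXiv:1009.5900 — 5 statements merged into one kernel-verified Lean document; each statement's English description precedes it below -/
import Mathlib

section
/- Let R > 0, β ≥ 2, and let L be a random variable uniformly distributed on [−R, R]. Define U = (|L|/(2R − L))^β. Then for every θ > 0, writing t = θ^{−1/β}, the probability P[U ≤ 1/θ] equals: t/(1+t) + t/(1−t) if θ > 3^β; t/(1+t) + 1/2 if 1 < θ ≤ 3^β; and 1 if θ ≤ 1. -/
/-!
After channel inversion the event `U ≤ 1/θ` is `|L| ≤ t (2R - L)` with `t = θ^{-1/β}`, i.e.
`-2Rt/(1-t) ≤ L ≤ 2Rt/(1+t)` (the left constraint being void when `t ≥ 1`). Intersected with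
`[-R, R]` this is again an interval: the left end is cut off at `-R` exactly when `t ≥ 1/3`, and
the right end at `R` exactly when `t ≥ 1`. Its length divided by `2R` is the probability.
-/

open MeasureTheory Real

/-- The uniform probability measure on the interval `[-R, R]`. -/
noncomputable def unif (R : ℝ) : Measure ℝ :=
  (ENNReal.ofReal (2 * R))⁻¹ • (volume.restrict (Set.Icc (-R) R))

open Set

lemma unif_eq_of_inter_Icc_eq {R a b : ℝ} (hR : 0 < R) {s : Set ℝ}
    (hs : s ∩ Icc (-R) R = Icc a b) : unif R s = ENNReal.ofReal ((b - a) / (2 * R)) := by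
  rw [unif, Measure.smul_apply, Measure.restrict_apply' measurableSet_Icc, hs, volume_Icc,
    smul_eq_mul, ← ENNReal.ofReal_inv_of_pos (by positivity),
    ← ENNReal.ofReal_mul (by positivity), div_eq_inv_mul]

lemma rpow_neg_one_div_lt_iff {β θ c : ℝ} (hβ : 0 < β) (hθ : 0 < θ) (hc : 0 < c) :
    θ ^ (-(1 / β)) < c ↔ c ^ (-β) < θ := by
  rw [← one_div_neg_eq_neg_one_div, one_div]
  exact rpow_inv_lt_iff_of_neg hθ hc (neg_lt_zero.2 hβ)

section Interval

variable {R t : ℝ}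

lemma setOf_div_rpow_le_inter_Icc {β : ℝ} (hR : 0 < R) (ht : 0 ≤ t) (hβ : 0 < β) :
    {x : ℝ | (|x| / (2 * R - x)) ^ β ≤ t ^ β} ∩ Icc (-R) R =
      {x : ℝ | |x| ≤ t * (2 * R - x)} ∩ Icc (-R) R := by
  ext x
  simp only [mem_inter_iff, mem_ofPred_eq, and_congr_left_iff, mem_Icc]
  rintro ⟨-, hxR⟩
  have hd : 0 < 2 * R - x := by linarith
  rw [rpow_le_rpow_iff (div_nonneg (abs_nonneg x) hd.le) ht hβ, div_le_iff₀ hd, mul_comm]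

lemma setOf_abs_le_inter_Icc_of_lt_one_third (hR : 0 < R) (ht : 0 ≤ t) (ht3 : t < 1 / 3) :
    {x : ℝ | |x| ≤ t * (2 * R - x)} ∩ Icc (-R) R =
      Icc (-(2 * R * t / (1 - t))) (2 * R * t / (1 + t)) := by
  have h1mt : 0 < 1 - t := by linarith
  have h1pt : 0 < 1 + t := by linarith
  ext x
  simp only [mem_inter_iff, mem_ofPred_eq, mem_Icc, abs_le, neg_le (a := 2 * R * t / (1 - t)),
    le_div_iff₀ h1mt, le_div_iff₀ h1pt]
  constructor
  · rintro ⟨⟨hl, hr⟩, -⟩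
    constructor <;> nlinarith
  · rintro ⟨hl, hr⟩
    refine ⟨⟨by nlinarith, by nlinarith⟩, ?_, ?_⟩
    · nlinarith [mul_pos hR (show 0 < 1 - 3 * t by linarith)]
    · nlinarith [mul_pos hR h1mt]

lemma setOf_abs_le_inter_Icc_of_one_third_le (hR : 0 < R) (ht3 : 1 / 3 ≤ t) (ht1 : t < 1) :
    {x : ℝ | |x| ≤ t * (2 * R - x)} ∩ Icc (-R) R = Icc (-R) (2 * R * t / (1 + t)) := by
  have h1mt : 0 < 1 - t := by linarith
  ext x
  simp only [mem_inter_iff, mem_ofPred_eq, mem_Icc, abs_le, le_div_iff₀ (by linarith : 0 < 1 + t)]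
  constructor
  · rintro ⟨⟨-, hr⟩, hl, -⟩
    exact ⟨hl, by nlinarith⟩
  · rintro ⟨hl, hr⟩
    refine ⟨⟨?_, by nlinarith⟩, hl, by nlinarith [mul_pos hR h1mt]⟩
    nlinarith [mul_nonneg (show 0 ≤ x + R by linarith) h1mt.le,
      mul_nonneg hR.le (show 0 ≤ 3 * t - 1 by linarith)]

lemma setOf_abs_le_inter_Icc_of_one_le (hR : 0 < R) (ht1 : 1 ≤ t) :
    {x : ℝ | |x| ≤ t * (2 * R - x)} ∩ Icc (-R) R = Icc (-R) R := by
  refine inter_eq_right.2 fun x hx => ?_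
  have hxR : |x| ≤ R := abs_le.2 hx
  have : R ≤ 2 * R - x := by linarith [hx.2]
  show |x| ≤ t * (2 * R - x)
  nlinarith

end Interval

/-- For `L ~ Uniform[-R,R]` and `U = (|L|/(2R - L))^β`, the probability `P[U ≤ 1/θ]`
is given by the stated piecewise formula in `t = θ^{-1/β}`. -/
theorem stmt_0 (R β θ : ℝ) (hR : 0 < R) (hβ : 2 ≤ β) (hθ : 0 < θ) :
    unif R {x : ℝ | (|x| / (2 * R - x)) ^ β ≤ 1 / θ} =
      ENNReal.ofReal
        (if 3 ^ β < θ then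
            θ ^ (-(1 / β)) / (1 + θ ^ (-(1 / β))) + θ ^ (-(1 / β)) / (1 - θ ^ (-(1 / β)))
          else if 1 < θ then
            θ ^ (-(1 / β)) / (1 + θ ^ (-(1 / β))) + 1 / 2
          else 1) := by
  have hβ0 : 0 < β := by linarith
  have h3 : θ ^ (-(1 / β)) < 1 / 3 ↔ 3 ^ β < θ := by
    rw [rpow_neg_one_div_lt_iff hβ0 hθ (by norm_num), rpow_neg (by norm_num), one_div,
      inv_rpow (by norm_num), inv_inv]
  have h1 : θ ^ (-(1 / β)) < 1 ↔ 1 < θ := by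
    rw [rpow_neg_one_div_lt_iff hβ0 hθ one_pos, one_rpow]
  set t := θ ^ (-(1 / β))
  have ht : 0 < t := rpow_pos_of_pos hθ _
  have htβ : t ^ β = 1 / θ := by
    rw [← rpow_mul hθ.le, neg_mul, one_div_mul_cancel hβ0.ne', rpow_neg_one, one_div]
  have hs := htβ ▸ setOf_div_rpow_le_inter_Icc hR ht.le hβ0
  split_ifs with hθ3 hθ1
  · have ht3 := h3.2 hθ3
    have : 1 - t ≠ 0 := by linarith
    rw [unif_eq_of_inter_Icc_eq hR
      (hs.trans (setOf_abs_le_inter_Icc_of_lt_one_third hR ht.le ht3))]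
    congr 1
    field_simp
    ring
  · rw [unif_eq_of_inter_Icc_eq hR
      (hs.trans (setOf_abs_le_inter_Icc_of_one_third_le hR (not_lt.1 (mt h3.1 hθ3)) (h1.2 hθ1)))]
    congr 1
    field_simp
    ring
  · rw [unif_eq_of_inter_Icc_eq hR
      (hs.trans (setOf_abs_le_inter_Icc_of_one_le hR (not_lt.1 (mt h1.1 hθ1))))]
    congr 1
    field_simp
    ring
end

section
/- Let R > 0, β ≥ 2, and let L, L′ be independent random variables each uniformly distributed on [−R, R]. Define U = (|L|/(2R − L))^β and V = (|L′|/(2R + L′))^β. Then for every θ > 0 the outage probability q = P[U + V > 1/θ] satisfies q ≥ 1 − p(θ)², where p(θ) = P[U ≤ 1/θ] is given explicitly (with t = θ^{−1/β}) by: p(θ) = t/(1+t) + t/(1−t) if θ > 3^β; p(θ) = t/(1+t) + 1/2 if 1 < θ ≤ 3^β; and p(θ) = 1 if θ ≤ 1. -/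
/-!
Only `[-R, R]²` carries mass, and there both interference terms are nonnegative, so
`U + V ≤ 1/θ` forces `U ≤ 1/θ` and `V ≤ 1/θ`. By independence the probability of no outage is
at most `P[U ≤ 1/θ] · P[V ≤ 1/θ] = P[U ≤ 1/θ]²`, since `L' ↦ -L'` preserves the uniform law and
turns `V` into `U`. With `t = θ^{-1/β} < 1`, the event `U ≤ t^β` reads `|L| ≤ t (2R - L)`, i.e.
`L ∈ [-2Rt/(1-t), 2Rt/(1+t)]`, and this interval meets `[-R, R]` in length at most `2R · p(θ)`.
-/
open MeasureTheory Real

open Set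

namespace Uplink

variable {R : ℝ}

lemma unif_apply (s : Set ℝ) :
    unif R s = (ENNReal.ofReal (2 * R))⁻¹ * volume (s ∩ Icc (-R) R) := by
  rw [unif, Measure.smul_apply, Measure.restrict_apply' measurableSet_Icc, smul_eq_mul]

instance (R : ℝ) : SFinite (unif R) := by unfold unif; infer_instance

lemma isProbabilityMeasure_unif (hR : 0 < R) : IsProbabilityMeasure (unif R) := by
  refine ⟨?_⟩
  rw [unif_apply, univ_inter, Real.volume_Icc, show R - -R = 2 * R by ring]
  exact ENNReal.inv_mul_cancel (by simp [hR]) ENNReal.ofReal_ne_top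

lemma unif_restrict_Icc : (unif R).restrict (Icc (-R) R) = unif R := by
  ext s hs
  rw [Measure.restrict_apply hs, unif_apply, unif_apply, inter_assoc, inter_self]

lemma unif_prod_unif_eq_restrict :
    (unif R).prod (unif R) = ((unif R).prod (unif R)).restrict (Icc (-R) R ×ˢ Icc (-R) R) := by
  rw [← Measure.prod_restrict, unif_restrict_Icc]

lemma unif_neg (s : Set ℝ) : unif R (-s) = unif R s := by
  rw [unif_apply, unif_apply, ← Measure.measure_neg, Set.inter_neg, neg_neg, Set.neg_Icc, neg_neg]

lemma unif_le_of_inter_subset_Icc (hR : 0 < R) {s : Set ℝ} {a b : ℝ}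
    (h : s ∩ Icc (-R) R ⊆ Icc a b) : unif R s ≤ ENNReal.ofReal ((b - a) / (2 * R)) := by
  rw [unif_apply, ENNReal.ofReal_div_of_pos (by positivity), div_eq_mul_inv, mul_comm]
  gcongr
  exact (measure_mono h).trans_eq (Real.volume_Icc)

/-- The paper's `p(θ)`, with `t = θ^{-1/β}` written out. -/
noncomputable def successProb (β θ : ℝ) : ℝ :=
  if 3 ^ β < θ then
    θ ^ (-(1 / β)) / (1 + θ ^ (-(1 / β))) + θ ^ (-(1 / β)) / (1 - θ ^ (-(1 / β)))
  else if 1 < θ then θ ^ (-(1 / β)) / (1 + θ ^ (-(1 / β))) + 1 / 2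
  else 1

lemma mem_Icc_of_rpow_div_le {β t x : ℝ} (hR : 0 < R) (hβ : 0 < β) (ht0 : 0 < t) (ht1 : t < 1)
    (hxR : x ≤ R) (h : (|x| / (2 * R - x)) ^ β ≤ t ^ β) :
    x ∈ Icc (-(2 * R * t / (1 - t))) (2 * R * t / (1 + t)) := by
  have hd : 0 < 2 * R - x := by linarith
  have habs : |x| ≤ t * (2 * R - x) := by
    rwa [Real.rpow_le_rpow_iff (by positivity) ht0.le hβ, div_le_iff₀ hd] at h
  have hx_le := (le_abs_self x).trans habs
  have hneg_le := (neg_le_abs x).trans habs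
  constructor
  · rw [neg_le, le_div_iff₀ (by linarith)]
    nlinarith
  · rw [le_div_iff₀ (by linarith)]
    nlinarith

lemma unif_rpow_div_le_successProb {β θ : ℝ} (hR : 0 < R) (hβ : 0 < β) (hθ : 0 < θ) :
    unif R {x | (|x| / (2 * R - x)) ^ β ≤ 1 / θ} ≤ ENNReal.ofReal (successProb β θ) := by
  have := isProbabilityMeasure_unif hR
  by_cases hθ1 : 1 < θ
  swap
  · have h3 : ¬ (3 : ℝ) ^ β < θ := fun h =>
      hθ1 (lt_of_le_of_lt (Real.one_le_rpow (by norm_num) hβ.le) h)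
    rw [successProb, if_neg h3, if_neg hθ1, ENNReal.ofReal_one]
    exact prob_le_one
  set t := θ ^ (-(1 / β)) with ht
  have ht0 : 0 < t := Real.rpow_pos_of_pos hθ _
  have ht1 : t < 1 := Real.rpow_lt_one_of_one_lt_of_neg hθ1 (by simp [hβ])
  have htβ : t ^ β = 1 / θ := by
    rw [ht, ← Real.rpow_mul hθ.le, show -(1 / β) * β = -1 by field_simp, Real.rpow_neg_one,
      one_div]
  have hIcc : {x | (|x| / (2 * R - x)) ^ β ≤ 1 / θ} ∩ Icc (-R) R ⊆
      Icc (-(2 * R * t / (1 - t))) (2 * R * t / (1 + t)) := fun x ⟨hx, hxK⟩ =>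
    mem_Icc_of_rpow_div_le hR hβ ht0 ht1 hxK.2 (htβ ▸ hx)
  rw [successProb, ← ht]
  -- Both interval bounds hold for every `θ > 1`; the threshold `3^β` only decides which is sharp.
  split_ifs
  · refine (unif_le_of_inter_subset_Icc hR hIcc).trans_eq (congrArg _ ?_)
    field_simp
    ring
  · refine (unif_le_of_inter_subset_Icc hR (a := -R) fun x hx =>
      ⟨hx.2.1, (hIcc hx).2⟩).trans_eq (congrArg _ ?_)
    field_simp
    ring

lemma compl_outage_inter_subset (hR : 0 ≤ R) (β θ : ℝ) :
    {p : ℝ × ℝ | 1 / θ < (|p.1| / (2 * R - p.1)) ^ β + (|p.2| / (2 * R + p.2)) ^ β}ᶜ ∩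
        Icc (-R) R ×ˢ Icc (-R) R ⊆
      {x | (|x| / (2 * R - x)) ^ β ≤ 1 / θ} ×ˢ (-{x | (|x| / (2 * R - x)) ^ β ≤ 1 / θ}) := by
  rintro ⟨x, y⟩ ⟨hxy, ⟨-, hxR⟩, ⟨hRy, -⟩⟩
  have hU : 0 ≤ (|x| / (2 * R - x)) ^ β := by
    apply Real.rpow_nonneg; apply div_nonneg (abs_nonneg x); linarith
  have hV : 0 ≤ (|y| / (2 * R + y)) ^ β := by
    apply Real.rpow_nonneg; apply div_nonneg (abs_nonneg y); linarith
  simp only [mem_compl_iff, mem_ofPred_eq, not_lt] at hxy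
  simp only [mem_prod, mem_neg, mem_ofPred_eq, abs_neg, sub_neg_eq_add]
  constructor <;> linarith

end Uplink

open Uplink in
/-- With `L, L'` independent `Uniform[-R,R]`, `U = (|L|/(2R-L))^β`, `V = (|L'|/(2R+L'))^β`,
the outage probability `q = P[U + V > 1/θ]` satisfies `q ≥ 1 - p(θ)^2` where
`p(θ) = P[U ≤ 1/θ]` is the explicit piecewise expression in `t = θ^{-1/β}`. -/
theorem stmt_1 (R β θ : ℝ) (hR : 0 < R) (hβ : 2 ≤ β) (hθ : 0 < θ) :
    ((unif R).prod (unif R))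
        {p : ℝ × ℝ | 1 / θ < (|p.1| / (2 * R - p.1)) ^ β + (|p.2| / (2 * R + p.2)) ^ β} ≥
      1 - (ENNReal.ofReal
        (if 3 ^ β < θ then
            θ ^ (-(1 / β)) / (1 + θ ^ (-(1 / β))) + θ ^ (-(1 / β)) / (1 - θ ^ (-(1 / β)))
          else if 1 < θ then
            θ ^ (-(1 / β)) / (1 + θ ^ (-(1 / β))) + 1 / 2
          else 1)) ^ 2 := by
  have := isProbabilityMeasure_unif hR
  set S := {x : ℝ | (|x| / (2 * R - x)) ^ β ≤ 1 / θ}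
  set A := {p : ℝ × ℝ | 1 / θ < (|p.1| / (2 * R - p.1)) ^ β + (|p.2| / (2 * R + p.2)) ^ β}
  have hAc : (unif R).prod (unif R) Aᶜ ≤ ENNReal.ofReal (successProb β θ) ^ 2 := by
    calc (unif R).prod (unif R) Aᶜ
        = (unif R).prod (unif R) (Aᶜ ∩ Icc (-R) R ×ˢ Icc (-R) R) := by
          conv_lhs => rw [unif_prod_unif_eq_restrict]
          exact Measure.restrict_apply' (measurableSet_Icc.prod measurableSet_Icc)
      _ ≤ unif R S * unif R (-S) :=
          (measure_mono (compl_outage_inter_subset hR.le β θ)).trans_eq (Measure.prod_prod _ _)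
      _ ≤ ENNReal.ofReal (successProb β θ) ^ 2 := by
          rw [unif_neg, ← sq]
          gcongr
          exact unif_rpow_div_le_successProb hR (by linarith) hθ
  rw [ge_iff_le, tsub_le_iff_right]
  calc 1 ≤ (unif R).prod (unif R) A + (unif R).prod (unif R) Aᶜ := by
        simpa using measure_univ_le_add_compl (μ := (unif R).prod (unif R)) A
    _ ≤ _ := add_le_add_right hAc _
end

section
/- Let R > 0, β ≥ 2, c₁ > 0, c₂ > 0, and let L₁, L₂ be independent random variables each uniformly distributed on [−R, R]. Define A = (|L₁|/c₁)^β and B = (|L₂|/c₂)^β. Then for every θ > 0, with t = θ^{−1/β}: P[A + B > 1/θ] ≥ 1 − min{t·c₁/R, 1}·min{t·c₂/R, 1}. -/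
open MeasureTheory Real

lemma isProbabilityMeasure_unif {R : ℝ} (hR : 0 < R) : IsProbabilityMeasure (unif R) := by
  constructor
  simp only [unif, Measure.smul_apply, Measure.restrict_apply MeasurableSet.univ,
    Set.univ_inter, Real.volume_Icc, smul_eq_mul]
  rw [show R - -R = 2 * R by ring]
  exact ENNReal.inv_mul_cancel (ENNReal.ofReal_pos.mpr (by linarith)).ne' ENNReal.ofReal_ne_top

lemma unif_Icc_le {R : ℝ} (hR : 0 < R) (a : ℝ) :
    unif R (Set.Icc (-a) a) ≤ ENNReal.ofReal (min (a / R) 1) := by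
  have := isProbabilityMeasure_unif hR
  have h_le_ratio : unif R (Set.Icc (-a) a) ≤ ENNReal.ofReal (a / R) :=
    calc unif R (Set.Icc (-a) a)
        ≤ (ENNReal.ofReal (2 * R))⁻¹ * volume (Set.Icc (-a) a) := by
          simp only [unif, Measure.smul_apply, smul_eq_mul]
          gcongr
          exact Measure.restrict_le_self
      _ = ENNReal.ofReal (a / R) := by
          rw [Real.volume_Icc, mul_comm, ← div_eq_mul_inv,
            ← ENNReal.ofReal_div_of_pos (by linarith)]
          congr 1
          field_simp
          ring
  rw [ENNReal.ofReal_min, ENNReal.ofReal_one]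
  exact le_min h_le_ratio prob_le_one

lemma mem_Icc_of_rpow_abs_div_le {β c t x : ℝ} (hβ : 0 < β) (hc : 0 < c) (ht : 0 ≤ t)
    (h : (|x| / c) ^ β ≤ t ^ β) : x ∈ Set.Icc (-(t * c)) (t * c) := by
  rw [Real.rpow_le_rpow_iff (by positivity) ht hβ, div_le_iff₀ hc] at h
  exact abs_le.mp h

lemma compl_setOf_rpow_lt_add_subset {β c₁ c₂ t : ℝ} (hβ : 0 < β) (hc₁ : 0 < c₁) (hc₂ : 0 < c₂)
    (ht : 0 ≤ t) :
    {p : ℝ × ℝ | t ^ β < (|p.1| / c₁) ^ β + (|p.2| / c₂) ^ β}ᶜ ⊆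
      Set.Icc (-(t * c₁)) (t * c₁) ×ˢ Set.Icc (-(t * c₂)) (t * c₂) := by
  rintro ⟨x, y⟩ hxy
  simp only [Set.mem_compl_iff, Set.mem_ofPred_eq, not_lt] at hxy
  have hA : 0 ≤ (|x| / c₁) ^ β := by positivity
  have hB : 0 ≤ (|y| / c₂) ^ β := by positivity
  exact ⟨mem_Icc_of_rpow_abs_div_le hβ hc₁ ht (by linarith),
    mem_Icc_of_rpow_abs_div_le hβ hc₂ ht (by linarith)⟩

/-- For independent `L₁, L₂ ~ Uniform[-R,R]`, `A = (|L₁|/c₁)^β`, `B = (|L₂|/c₂)^β`,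
and any `θ > 0`, with `t = θ^{-1/β}`:
`P[A + B > 1/θ] ≥ 1 - min(t·c₁/R, 1)·min(t·c₂/R, 1)`. -/
theorem stmt_9 (R β c₁ c₂ θ : ℝ) (hR : 0 < R) (hβ : 2 ≤ β)
    (hc₁ : 0 < c₁) (hc₂ : 0 < c₂) (hθ : 0 < θ) :
    ((unif R).prod (unif R))
        {p : ℝ × ℝ | 1 / θ < (|p.1| / c₁) ^ β + (|p.2| / c₂) ^ β} ≥
      1 - ENNReal.ofReal (min (θ ^ (-(1 / β)) * c₁ / R) 1) *
            ENNReal.ofReal (min (θ ^ (-(1 / β)) * c₂ / R) 1) := by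
  have := isProbabilityMeasure_unif hR
  set t : ℝ := θ ^ (-(1 / β))
  have htβ : t ^ β = 1 / θ := by
    rw [← Real.rpow_mul hθ.le, show -(1 / β) * β = -1 by field_simp, Real.rpow_neg_one, one_div]
  rw [← htβ, ge_iff_le, tsub_le_iff_right]
  set E := {p : ℝ × ℝ | t ^ β < (|p.1| / c₁) ^ β + (|p.2| / c₂) ^ β}
  calc (1 : ENNReal) = (unif R).prod (unif R) Set.univ := measure_univ.symm
    _ ≤ (unif R).prod (unif R) E + (unif R).prod (unif R) Eᶜ := measure_univ_le_add_compl E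
    _ ≤ (unif R).prod (unif R) E +
          unif R (Set.Icc (-(t * c₁)) (t * c₁)) * unif R (Set.Icc (-(t * c₂)) (t * c₂)) := by
        rw [← Measure.prod_prod]
        gcongr
        exact compl_setOf_rpow_lt_add_subset (by linarith) hc₁ hc₂ (by positivity)
    _ ≤ _ := by
        gcongr <;> exact unif_Icc_le hR _
end

section
/- Let R > 0, β > 1 with β ≥ 2, and let L, L′ be independent random variables each uniformly distributed on [−R, R]. Then E[(|L′|/(2R + L))^β] = (1 − 3^{1−β})/(2(β+1)(β−1)). -/
open MeasureTheory Real

instance (R : ℝ) : SFinite (unif R) := by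
  unfold unif; infer_instance

lemma ae_mem_Icc_unif (R : ℝ) : ∀ᵐ x ∂unif R, x ∈ Set.Icc (-R) R :=
  Measure.ae_smul_measure (ae_restrict_mem measurableSet_Icc) _

lemma integral_unif {R : ℝ} (hR : 0 ≤ R) (f : ℝ → ℝ) :
    ∫ x, f x ∂unif R = (2 * R)⁻¹ * ∫ x in -R..R, f x := by
  rw [unif, integral_smul_measure, intervalIntegral.integral_of_le (by linarith),
    ← integral_Icc_eq_integral_Ioc, ENNReal.toReal_inv, ENNReal.toReal_ofReal (by linarith),
    smul_eq_mul]

lemma integral_abs_rpow_symm {R r : ℝ} (hR : 0 ≤ R) (hr : -1 < r) :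
    ∫ y in -R..R, |y| ^ r = 2 * R ^ (r + 1) / (r + 1) := by
  have habs : Set.EqOn (fun y : ℝ => |y| ^ r) (· ^ r) (Set.uIoc 0 R) := fun y hy => by
    rw [Set.uIoc_of_le hR] at hy; simp only [abs_of_pos hy.1]
  have hint : IntervalIntegrable (fun y : ℝ => |y| ^ r) volume 0 R :=
    (intervalIntegral.intervalIntegrable_rpow' hr).congr habs.symm
  have hint' : IntervalIntegrable (fun y : ℝ => |y| ^ r) volume (-R) 0 := by
    simpa using (hint.comp_sub_left 0).symm
  have hneg : ∫ y in -R..0, |y| ^ r = ∫ y in 0..R, |y| ^ r := by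
    simpa using intervalIntegral.integral_comp_neg (a := -R) (b := 0) (fun y : ℝ => |y| ^ r)
  rw [← intervalIntegral.integral_add_adjacent_intervals hint' hint, hneg,
    intervalIntegral.integral_congr_ae (Filter.Eventually.of_forall fun y hy => habs hy),
    integral_rpow (Or.inl hr), zero_rpow (by linarith)]
  ring

lemma integral_two_mul_add_rpow {R r : ℝ} (hR : 0 < R) (hr : r ≠ -1) :
    ∫ x in -R..R, (2 * R + x) ^ r = ((3 * R) ^ (r + 1) - R ^ (r + 1)) / (r + 1) := by
  rw [intervalIntegral.integral_comp_add_left (· ^ r), integral_rpow]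
  · ring_nf
  · refine Or.inr ⟨hr, fun h => ?_⟩
    rw [Set.uIcc_of_le (by linarith)] at h
    linarith [h.1]

theorem stmt_12_general (R β : ℝ) (hR : 0 < R) (hβ1 : 1 < β) :
    (∫ p, (|p.2| / (2 * R + p.1)) ^ β ∂ ((unif R).prod (unif R))) =
      (1 - 3 ^ (1 - β)) / (2 * (β + 1) * (β - 1)) := by
  have hsplit : (fun p : ℝ × ℝ => (|p.2| / (2 * R + p.1)) ^ β)
      =ᵐ[(unif R).prod (unif R)] fun p => (2 * R + p.1) ^ (-β) * |p.2| ^ β := by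
    filter_upwards [Measure.quasiMeasurePreserving_fst.ae (ae_mem_Icc_unif R)] with p hp
    have hpos : 0 < 2 * R + p.1 := by linarith [hp.1]
    rw [div_rpow (abs_nonneg _) hpos.le, rpow_neg hpos.le, div_eq_inv_mul]
  rw [integral_congr_ae hsplit,
    integral_prod_mul (fun x => (2 * R + x) ^ (-β)) (fun y => |y| ^ β),
    integral_unif hR.le, integral_unif hR.le, integral_two_mul_add_rpow hR (by linarith),
    integral_abs_rpow_symm hR.le (by linarith), mul_rpow (by norm_num) hR.le]
  have hRR : R ^ (-β + 1) * R ^ (β + 1) = R ^ 2 := by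
    rw [← rpow_add hR, ← rpow_natCast]; push_cast; ring_nf
  have : β - 1 ≠ 0 := by linarith
  have : -β + 1 ≠ 0 := by linarith
  have : β + 1 ≠ 0 := by linarith
  rw [show 1 - β = -β + 1 by ring]
  field_simp
  linear_combination (β - 1) * (3 ^ (-β + 1) - 1) * hRR

/-- For independent `L, L' ~ Uniform[-R,R]` and `β > 1` with `β ≥ 2`,
`E[(|L'|/(2R + L))^β] = (1 - 3^{1-β}) / (2(β+1)(β-1))`. -/
theorem stmt_12 (R β : ℝ) (hR : 0 < R) (hβ1 : 1 < β) (hβ : 2 ≤ β) :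
    (∫ p, (|p.2| / (2 * R + p.1)) ^ β ∂ ((unif R).prod (unif R))) =
      (1 - 3 ^ (1 - β)) / (2 * (β + 1) * (β - 1)) :=
  stmt_12_general R β hR hβ1
end

section
/- Fix N ≥ 1 and c > 0, and define f on real symmetric positive semidefinite N×N matrices by f(M) = inf over all diagonal N×N matrices A with strictly positive diagonal entries and trace(A) ≤ c of [log det(M + A) − log det(A)]. Let M₁,…,M_K be identically distributed random real symmetric positive semidefinite N×N matrices (on a common probability space). Then E[f((1/K)·∑_{k=1}^K M_k)] ≥ E[f(M₁)], where both expectations are of nonnegative random variables (values in [0, ∞]). -/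
open MeasureTheory

noncomputable instance matrixMeasurableSpace {m n : Type*} :
    MeasurableSpace (Matrix m n ℝ) := MeasurableSpace.pi

/-- `wynerMin N c M` is the infimum, over diagonal matrices `A` with strictly positive
diagonal entries and trace at most `c`, of `log det(M + A) - log det(A)`. -/
noncomputable def wynerMin (N : ℕ) (c : ℝ) (M : Matrix (Fin N) (Fin N) ℝ) : ℝ :=
  sInf {y : ℝ | ∃ a : Fin N → ℝ, (∀ i, 0 < a i) ∧ (Matrix.diagonal a).trace ≤ c ∧
    y = Real.log (M + Matrix.diagonal a).det - Real.log (Matrix.diagonal a).det}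

/-!
The objective `log det (M + A) - log det A` is, for fixed `A`, concave in `M` because `log det` is
concave on positive definite matrices; this follows from the variational bound
`log det X + log det B ≤ tr (X B) - n`, i.e. `log x ≤ x - 1` on the eigenvalues of `√X B √X`,
summed over `B = M_k + A` with `X` the inverse of their average. An infimum of concave functions
is concave, so `f` of the average of the `M_k` dominates the average of the `f (M_k)`, and taking
expectations of identically distributed terms gives the claim. Measurability of `f` comes from
upper semicontinuity: with Lean's `Real.log 0 = 0`, the map `M ↦ log det (M + A)` is upper
semicontinuous, and so is an infimum of such maps.
-/

open Matrix
open scoped ENNReal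

instance Matrix.borelSpace {m n : Type*} [Countable m] [Countable n] :
    BorelSpace (Matrix m n ℝ) :=
  inferInstanceAs (BorelSpace (m → n → ℝ))

namespace Matrix

variable {n : Type*} [Fintype n] [DecidableEq n]

theorem PosDef.log_det_le_trace_sub_card {C : Matrix n n ℝ} (hC : C.PosDef) :
    Real.log C.det ≤ C.trace - Fintype.card n := by
  have hpos := hC.eigenvalues_pos
  rw [hC.isHermitian.det_eq_prod_eigenvalues, hC.isHermitian.trace_eq_sum_eigenvalues]
  simp only [RCLike.ofReal_real_eq_id, id]
  rw [Real.log_prod fun i _ => (hpos i).ne']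
  calc ∑ i, Real.log (hC.isHermitian.eigenvalues i)
      ≤ ∑ i, (hC.isHermitian.eigenvalues i - 1) :=
        Finset.sum_le_sum fun i _ => Real.log_le_sub_one_of_pos (hpos i)
    _ = _ := by simp

open scoped MatrixOrder

theorem PosSemidef.sqrt_mul_mul_sqrt {M : Matrix n n ℝ} (hM : M.PosSemidef)
    (P : Matrix n n ℝ) : (CFC.sqrt P * M * CFC.sqrt P).PosSemidef := by
  have h := hM.mul_mul_conjTranspose_same (CFC.sqrt P)
  rwa [(CFC.sqrt_nonneg P).posSemidef.isHermitian.eq] at h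

theorem PosSemidef.trace_sqrt_mul_mul_sqrt {P : Matrix n n ℝ} (hP : P.PosSemidef)
    (M : Matrix n n ℝ) : (CFC.sqrt P * M * CFC.sqrt P).trace = (P * M).trace := by
  rw [trace_mul_cycle, CFC.sqrt_mul_sqrt_self P hP.nonneg]

theorem PosSemidef.det_sqrt_mul_mul_sqrt {P : Matrix n n ℝ} (hP : P.PosSemidef)
    (M : Matrix n n ℝ) : (CFC.sqrt P * M * CFC.sqrt P).det = P.det * M.det := by
  rw [det_mul, det_mul, mul_right_comm, ← det_mul, CFC.sqrt_mul_sqrt_self P hP.nonneg]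

theorem PosSemidef.trace_mul_nonneg {P M : Matrix n n ℝ} (hP : P.PosSemidef)
    (hM : M.PosSemidef) : 0 ≤ (P * M).trace :=
  hP.trace_sqrt_mul_mul_sqrt M ▸ (hM.sqrt_mul_mul_sqrt P).trace_nonneg

theorem PosDef.log_det_add_log_det_le_trace_mul {X B : Matrix n n ℝ} (hX : X.PosDef)
    (hB : B.PosDef) : Real.log X.det + Real.log B.det ≤ (X * B).trace - Fintype.card n := by
  have hdet := hX.posSemidef.det_sqrt_mul_mul_sqrt B
  have hC : (CFC.sqrt X * B * CFC.sqrt X).PosDef :=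
    (hB.posSemidef.sqrt_mul_mul_sqrt X).posDef_iff_det_ne_zero.mpr
      (hdet ▸ (mul_pos hX.det_pos hB.det_pos).ne')
  have := hC.log_det_le_trace_sub_card
  rwa [hdet, hX.posSemidef.trace_sqrt_mul_mul_sqrt, Real.log_mul hX.det_pos.ne' hB.det_pos.ne']
    at this

theorem PosDef.log_det_le_log_det_add {A M : Matrix n n ℝ} (hA : A.PosDef)
    (hM : M.PosSemidef) : Real.log A.det ≤ Real.log (M + A).det := by
  have hMA : (M + A).PosDef := hA.posSemidef_add hM
  have h := hMA.inv.log_det_add_log_det_le_trace_mul hA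
  have htr : ((M + A)⁻¹ * A).trace = Fintype.card n - ((M + A)⁻¹ * M).trace := by
    rw [eq_sub_iff_add_eq, ← trace_add, ← Matrix.mul_add, add_comm A M,
      nonsing_inv_mul _ hMA.det_pos.ne'.isUnit, trace_one]
  rw [htr, det_nonsing_inv, Ring.inverse_eq_inv, Real.log_inv] at h
  linarith [hMA.inv.posSemidef.trace_mul_nonneg hM]

theorem PosDef.sum_log_det_le_card_mul_log_det_average {ι : Type*} [Fintype ι] [Nonempty ι]
    {B : ι → Matrix n n ℝ} (hB : ∀ k, (B k).PosDef) :
    ∑ k, Real.log (B k).det ≤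
      (Fintype.card ι : ℝ) * Real.log (((Fintype.card ι : ℝ)⁻¹ • ∑ k, B k).det) := by
  set K : ℝ := (Fintype.card ι : ℝ)
  have hK : K ≠ 0 := Nat.cast_ne_zero.mpr Fintype.card_ne_zero
  set G := K⁻¹ • ∑ k, B k
  have hG : G.PosDef := (posDef_sum Finset.univ_nonempty fun k _ => hB k).smul (by positivity)
  have hsum : ∑ k, (G⁻¹ * B k).trace = K * Fintype.card n := by
    rw [← trace_sum, ← Matrix.mul_sum, show ∑ k, B k = K • G by simp [G, smul_smul, hK],
      Matrix.mul_smul, nonsing_inv_mul _ hG.det_pos.ne'.isUnit, trace_smul, trace_one, smul_eq_mul]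
  have key := Finset.sum_le_sum fun k (_ : k ∈ Finset.univ) =>
    hG.inv.log_det_add_log_det_le_trace_mul (hB k)
  rw [Finset.sum_sub_distrib, hsum, Finset.sum_add_distrib, det_nonsing_inv, Ring.inverse_eq_inv,
    Real.log_inv] at key
  simp only [Finset.sum_const, Finset.card_univ, nsmul_eq_mul] at key
  linarith

end Matrix

theorem Real.upperSemicontinuous_log : UpperSemicontinuous Real.log := by
  intro x
  rcases eq_or_ne x 0 with rfl | hx
  · intro y hy
    rw [Real.log_zero] at hy
    filter_upwards [Metric.ball_mem_nhds (0 : ℝ) one_pos] with z hz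
    rw [Metric.mem_ball, dist_zero_right, Real.norm_eq_abs] at hz
    rw [← Real.log_abs]
    exact (Real.log_nonpos (abs_nonneg z) hz.le).trans_lt hy
  · exact (Real.continuousAt_log hx).upperSemicontinuousAt

theorem MeasureTheory.lintegral_inv_card_mul_sum_comp_of_map_eq {ι Ω α : Type*} [Fintype ι]
    [Nonempty ι] [MeasurableSpace Ω] [MeasurableSpace α] {μ : Measure Ω} {X : ι → Ω → α}
    {k₀ : ι} (hX : ∀ k, Measurable (X k)) (hmap : ∀ k, μ.map (X k) = μ.map (X k₀))
    {g : α → ℝ≥0∞} (hg : Measurable g) :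
    ∫⁻ ω, (Fintype.card ι : ℝ≥0∞)⁻¹ * ∑ k, g (X k ω) ∂μ = ∫⁻ ω, g (X k₀ ω) ∂μ := by
  have hsame : ∀ k, ∫⁻ ω, g (X k ω) ∂μ = ∫⁻ ω, g (X k₀ ω) ∂μ := fun k => by
    rw [← lintegral_map hg (hX k), hmap k, lintegral_map hg (hX k₀)]
  have hcard : (Fintype.card ι : ℝ≥0∞) ≠ 0 := Nat.cast_ne_zero.mpr Fintype.card_ne_zero
  rw [lintegral_const_mul' _ _ (ENNReal.inv_ne_top.mpr hcard),
    lintegral_finsetSum (f := fun k ω => g (X k ω)) _ fun k _ => hg.comp (hX k),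
    Finset.sum_congr rfl fun k _ => hsame k, Finset.sum_const, Finset.card_univ, nsmul_eq_mul,
    ← mul_assoc, ENNReal.inv_mul_cancel hcard (ENNReal.natCast_ne_top _), one_mul]

def wynerFeasible (n : Type*) [Fintype n] [DecidableEq n] (c : ℝ) : Set (n → ℝ) :=
  {a | (∀ i, 0 < a i) ∧ (diagonal a).trace ≤ c}

section Wyner

variable {n : Type*} [Fintype n] [DecidableEq n]

noncomputable def wynerObjective (M : Matrix n n ℝ) (a : n → ℝ) : ℝ :=
  Real.log (M + diagonal a).det - Real.log (diagonal a).det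

theorem wynerFeasible_nonempty {c : ℝ} (hc : 0 < c) : (wynerFeasible n c).Nonempty := by
  refine ⟨fun _ => c / (Fintype.card n + 1), fun _ => by positivity, ?_⟩
  rw [trace_diagonal, Finset.sum_const, Finset.card_univ, nsmul_eq_mul, mul_div_assoc']
  exact div_le_of_le_mul₀ (by positivity) hc.le (by linarith)

theorem wynerObjective_nonneg {M : Matrix n n ℝ} (hM : M.PosSemidef) {a : n → ℝ}
    (ha : ∀ i, 0 < a i) : 0 ≤ wynerObjective M a :=
  sub_nonneg.mpr ((PosDef.diagonal ha).log_det_le_log_det_add hM)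

theorem sum_wynerObjective_le {ι : Type*} [Fintype ι] [Nonempty ι] {M : ι → Matrix n n ℝ}
    (hM : ∀ k, (M k).PosSemidef) {a : n → ℝ} (ha : ∀ i, 0 < a i) :
    ∑ k, wynerObjective (M k) a ≤
      Fintype.card ι * wynerObjective ((Fintype.card ι : ℝ)⁻¹ • ∑ k, M k) a := by
  have hK : (Fintype.card ι : ℝ) ≠ 0 := Nat.cast_ne_zero.mpr Fintype.card_ne_zero
  have h := PosDef.sum_log_det_le_card_mul_log_det_average
    fun k => (PosDef.diagonal ha).posSemidef_add (hM k)
  have havg : (Fintype.card ι : ℝ)⁻¹ • ∑ k, (M k + diagonal a)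
      = (Fintype.card ι : ℝ)⁻¹ • ∑ k, M k + diagonal a := by
    rw [Finset.sum_add_distrib, Finset.sum_const, Finset.card_univ, smul_add,
      ← Nat.cast_smul_eq_nsmul ℝ, smul_smul, inv_mul_cancel₀ hK, one_smul]
  rw [havg] at h
  simp only [wynerObjective, Finset.sum_sub_distrib, Finset.sum_const, Finset.card_univ,
    nsmul_eq_mul, mul_sub]
  linarith

theorem upperSemicontinuous_ofReal_wynerObjective (a : n → ℝ) :
    UpperSemicontinuous fun M : Matrix n n ℝ => ENNReal.ofReal (wynerObjective M a) :=
  (ENNReal.continuous_ofReal.comp (continuous_sub_right _)).comp_upperSemicontinuous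
    (Real.upperSemicontinuous_log.comp (continuous_id.add continuous_const).matrix_det)
    fun _ _ h => ENNReal.ofReal_le_ofReal (sub_le_sub_right h _)

end Wyner

section WynerMin

variable {N : ℕ} {c : ℝ}

theorem wynerMin_eq_iInf (M : Matrix (Fin N) (Fin N) ℝ) :
    wynerMin N c M = ⨅ a : wynerFeasible (Fin N) c, wynerObjective M a := by
  rw [wynerMin, iInf, Set.range]
  congr 1
  ext y
  simp [wynerFeasible, wynerObjective, eq_comm, and_assoc]

theorem wynerMin_nonneg (hc : 0 < c) {M : Matrix (Fin N) (Fin N) ℝ} (hM : M.PosSemidef) :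
    0 ≤ wynerMin N c M := by
  have := (wynerFeasible_nonempty (n := Fin N) hc).to_subtype
  rw [wynerMin_eq_iInf]
  exact le_ciInf fun a => wynerObjective_nonneg hM a.2.1

theorem inv_card_mul_sum_wynerMin_le {ι : Type*} [Fintype ι] [Nonempty ι] (hc : 0 < c)
    {M : ι → Matrix (Fin N) (Fin N) ℝ} (hM : ∀ k, (M k).PosSemidef) :
    (Fintype.card ι : ℝ)⁻¹ * ∑ k, wynerMin N c (M k) ≤
      wynerMin N c ((Fintype.card ι : ℝ)⁻¹ • ∑ k, M k) := by
  have := (wynerFeasible_nonempty (n := Fin N) hc).to_subtype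
  have hK : (0 : ℝ) < Fintype.card ι := Nat.cast_pos.mpr Fintype.card_pos
  rw [wynerMin_eq_iInf]
  refine le_ciInf fun a => ?_
  have hle : ∑ k, wynerMin N c (M k) ≤ ∑ k, wynerObjective (M k) a :=
    Finset.sum_le_sum fun k _ => by
      rw [wynerMin_eq_iInf]
      exact ciInf_le ⟨0, Set.forall_mem_range.mpr fun b => wynerObjective_nonneg (hM k) b.2.1⟩ a
  rw [inv_mul_le_iff₀ hK]
  exact hle.trans (sum_wynerObjective_le hM a.2.1)

theorem ofReal_wynerMin (hc : 0 < c) (M : Matrix (Fin N) (Fin N) ℝ) :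
    ENNReal.ofReal (wynerMin N c M) =
      ⨅ a : wynerFeasible (Fin N) c, ENNReal.ofReal (wynerObjective M a) := by
  have := (wynerFeasible_nonempty (n := Fin N) hc).to_subtype
  rw [wynerMin_eq_iInf, ENNReal.ofReal_iInf]

theorem measurable_ofReal_wynerMin (hc : 0 < c) :
    Measurable fun M : Matrix (Fin N) (Fin N) ℝ => ENNReal.ofReal (wynerMin N c M) := by
  simp_rw [ofReal_wynerMin hc]
  have h := upperSemicontinuous_iInf fun a : wynerFeasible (Fin N) c =>
    upperSemicontinuous_ofReal_wynerObjective (n := Fin N) a.1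
  exact h.measurable

theorem inv_card_mul_sum_ofReal_wynerMin_le {ι : Type*} [Fintype ι] [Nonempty ι] (hc : 0 < c)
    {M : ι → Matrix (Fin N) (Fin N) ℝ} (hM : ∀ k, (M k).PosSemidef) :
    (Fintype.card ι : ℝ≥0∞)⁻¹ * ∑ k, ENNReal.ofReal (wynerMin N c (M k)) ≤
      ENNReal.ofReal (wynerMin N c ((Fintype.card ι : ℝ)⁻¹ • ∑ k, M k)) := by
  rw [← ENNReal.ofReal_sum_of_nonneg fun k _ => wynerMin_nonneg hc (hM k),
    ← ENNReal.ofReal_natCast, ← ENNReal.ofReal_inv_of_pos (Nat.cast_pos.mpr Fintype.card_pos),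
    ← ENNReal.ofReal_mul (by positivity)]
  exact ENNReal.ofReal_le_ofReal (inv_card_mul_sum_wynerMin_le hc hM)

end WynerMin

theorem stmt_16_general {N K : ℕ} (hK : 1 ≤ K) (c : ℝ) (hc : 0 < c)
    {Ω : Type*} [MeasurableSpace Ω] (ℙ : Measure Ω)
    (M : Fin K → Ω → Matrix (Fin N) (Fin N) ℝ)
    (hmeas : ∀ k, Measurable (M k))
    (hid : ∀ k, Measure.map (M k) ℙ = Measure.map (M ⟨0, hK⟩) ℙ)
    (hpsd : ∀ k ω, (M k ω).PosSemidef) :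
    ∫⁻ ω, ENNReal.ofReal (wynerMin N c ((K : ℝ)⁻¹ • ∑ k, M k ω)) ∂ ℙ ≥
      ∫⁻ ω, ENNReal.ofReal (wynerMin N c (M ⟨0, hK⟩ ω)) ∂ ℙ := by
  have : Nonempty (Fin K) := ⟨⟨0, hK⟩⟩
  calc ∫⁻ ω, ENNReal.ofReal (wynerMin N c (M ⟨0, hK⟩ ω)) ∂ℙ
      = ∫⁻ ω, (Fintype.card (Fin K) : ℝ≥0∞)⁻¹ *
          ∑ k, ENNReal.ofReal (wynerMin N c (M k ω)) ∂ℙ :=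
        (lintegral_inv_card_mul_sum_comp_of_map_eq hmeas hid (measurable_ofReal_wynerMin hc)).symm
    _ ≤ ∫⁻ ω, ENNReal.ofReal (wynerMin N c ((K : ℝ)⁻¹ • ∑ k, M k ω)) ∂ℙ :=
        lintegral_mono fun ω => by
          simpa only [Fintype.card_fin] using inv_card_mul_sum_ofReal_wynerMin_le hc (hpsd · ω)

/-- For identically distributed random real symmetric positive semidefinite matrices
`M₁,…,M_K`, `E[f((1/K)·∑_k M_k)] ≥ E[f(M₁)]` where
`f(M) = min_A [log det(M + A) - log det A]` over diagonal `A ≻ 0` with `trace A ≤ c`;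
both expectations are of nonnegative random variables (values in `[0,∞]`). -/
theorem stmt_16 {N K : ℕ} (hN : 1 ≤ N) (hK : 1 ≤ K) (c : ℝ) (hc : 0 < c)
    {Ω : Type*} [MeasurableSpace Ω] (ℙ : Measure Ω) [IsProbabilityMeasure ℙ]
    (M : Fin K → Ω → Matrix (Fin N) (Fin N) ℝ)
    (hmeas : ∀ k, Measurable (M k))
    (hid : ∀ k, Measure.map (M k) ℙ = Measure.map (M ⟨0, hK⟩) ℙ)
    (hpsd : ∀ k ω, (M k ω).PosSemidef) :
    ∫⁻ ω, ENNReal.ofReal (wynerMin N c ((K : ℝ)⁻¹ • ∑ k, M k ω)) ∂ ℙ ≥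
      ∫⁻ ω, ENNReal.ofReal (wynerMin N c (M ⟨0, hK⟩ ω)) ∂ ℙ :=
  stmt_16_general hK c hc ℙ M hmeas hid hpsd
end
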